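/- arXiv:2304.12759 — 5 statements merged into one kernel-verified Lean document; each statement's English description precedes it below -/
import Mathlib

section
/- Let f : [c,d] → ℝ be a C¹ function and g(x) = min{f(y) : x ≤ y ≤ d}. If g is differentiable at x ∈ (c,d) with g'(x) > 0, then g'(x) = f'(x). -/
/-!
Let `g t = min_{[t,d]} f`. Pick a minimiser `y` of `f` on `[x,d]`. If `y > x`, then `g` is constant
on `[x,y]`, so its one-sided derivative at `x` is `0`, contradicting `g'(x) > 0`; hence
`g x = f x`. Since `g ≤ f` near `x`, the function `f - g` has a local minimum at `x`, and so
`f'(x) - g'(x) = 0`.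
-/

open Set

theorem IsMinOn.csInf_image_eq {α β : Type*} [ConditionallyCompleteLattice β] {f : α → β}
    {s : Set α} {a : α} (hmin : IsMinOn f s a) (ha : a ∈ s) : sInf (f '' s) = f a :=
  IsLeast.csInf_eq ⟨mem_image_of_mem f ha, by rintro _ ⟨b, hb, rfl⟩; exact hmin hb⟩

theorem csInf_image_Icc_le_left {f : ℝ → ℝ} {a b : ℝ} (hf : ContinuousOn f (Icc a b))
    (hab : a ≤ b) : sInf (f '' Icc a b) ≤ f a :=
  csInf_le (isCompact_Icc.image_of_continuousOn hf).bddBelow (mem_image_of_mem f ⟨le_rfl, hab⟩)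

theorem csInf_image_Icc_eq_of_isMinOn {f : ℝ → ℝ} {a b y t : ℝ}
    (hmin : IsMinOn f (Icc a b) y) (hy : y ∈ Icc a b) (ht : t ∈ Icc a y) :
    sInf (f '' Icc t b) = f y :=
  IsMinOn.csInf_image_eq (hmin.on_subset (Icc_subset_Icc_left ht.1)) ⟨ht.2, hy.2⟩

theorem HasDerivAt.eq_zero_of_eqOn_Icc_const {g : ℝ → ℝ} {m x y C : ℝ} (hg : HasDerivAt g m x)
    (hxy : x < y) (hconst : EqOn g (fun _ ↦ C) (Icc x y)) : m = 0 :=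
  (uniqueDiffOn_Icc hxy x (left_mem_Icc.2 hxy.le)).eq_deriv _ hg.hasDerivWithinAt
    ((hasDerivWithinAt_const x _ C).congr hconst (hconst (left_mem_Icc.2 hxy.le)))

theorem isMinOn_Icc_left_of_hasDerivAt_csInf_ne_zero {f : ℝ → ℝ} {x b m : ℝ}
    (hf : ContinuousOn f (Icc x b)) (hxb : x ≤ b)
    (hder : HasDerivAt (fun t ↦ sInf (f '' Icc t b)) m x) (hm : m ≠ 0) :
    IsMinOn f (Icc x b) x := by
  obtain ⟨y, hy, hmin⟩ := isCompact_Icc.exists_isMinOn (nonempty_Icc.2 hxb) hf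
  obtain rfl | hxy := hy.1.eq_or_lt
  · exact hmin
  · exact absurd (hder.eq_zero_of_eqOn_Icc_const hxy
      fun t ht ↦ csInf_image_Icc_eq_of_isMinOn hmin hy ht) hm

theorem HasDerivAt.eq_of_eventually_le_of_eq {f g : ℝ → ℝ} {f' g' x : ℝ}
    (hg : HasDerivAt g g' x) (hf : HasDerivAt f f' x) (hle : g ≤ᶠ[nhds x] f) (hx : g x = f x) :
    g' = f' := by
  have hmin : IsLocalMin (fun t ↦ f t - g t) x := by
    filter_upwards [hle] with t ht
    simp only [hx, sub_self, sub_nonneg]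
    exact ht
  linarith [hmin.hasDerivAt_eq_zero (hf.sub hg)]

theorem stmt_2 (c d : ℝ) (f : ℝ → ℝ)
    (hf : ContDiffOn ℝ 1 f (Set.Icc c d))
    (g : ℝ → ℝ) (hg : ∀ x, g x = sInf (f '' Set.Icc x d))
    (x : ℝ) (hx : x ∈ Set.Ioo c d) (m : ℝ)
    (hder : HasDerivAt g m x) (hm : 0 < m) :
    m = derivWithin f (Set.Icc c d) x := by
  obtain rfl : g = fun t ↦ sInf (f '' Icc t d) := funext hg
  have hcont : ContinuousOn f (Icc c d) := hf.continuousOn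
  have hnhds : Icc c d ∈ nhds x := Icc_mem_nhds hx.1 hx.2
  have hfx : HasDerivAt f (derivWithin f (Icc c d) x) x := by
    rw [derivWithin_of_mem_nhds hnhds]
    exact ((hf.differentiableOn one_ne_zero).differentiableAt hnhds).hasDerivAt
  have hgx : sInf (f '' Icc x d) = f x :=
    (isMinOn_Icc_left_of_hasDerivAt_csInf_ne_zero (hcont.mono (Icc_subset_Icc_left hx.1.le))
      hx.2.le hder hm.ne').csInf_image_eq (left_mem_Icc.2 hx.2.le)
  refine hder.eq_of_eventually_le_of_eq hfx ?_ hgx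
  filter_upwards [hnhds] with t ht
  exact csInf_image_Icc_le_left (hcont.mono (Icc_subset_Icc_left ht.1)) ht.2
end

section
/- Let p : 𝔻 → ℂ be holomorphic with Re p ≥ 0, satisfying |p(z)| ≤ M/(1-|z|²) for all z ∈ 𝔻, and set G(z) = (z-1)² p(z). Then for every λ ∈ (0,1) and every z in the disc D(λ, 1-λ), one has |G(z)| ≤ M/λ. -/
/-! On the circle `|z - λ| = 1 - λ` the ratio `|z - 1|² / (1 - |z|²)` equals `(1 - λ) / λ`, and it is
smaller inside the disc `D(λ, 1 - λ)`. Hence `|z - 1|² ≤ (1 - |z|²) / λ` there, and the growth bound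
`|p(z)| ≤ M / (1 - |z|²)` turns into `|(z - 1)² p(z)| ≤ M / λ`. -/

open Metric

namespace Complex

theorem one_sub_mul_one_sub_norm_sq_sub_mul_norm_sub_one_sq (z : ℂ) (lam : ℝ) :
    (1 - lam) * (1 - ‖z‖ ^ 2) - lam * ‖z - 1‖ ^ 2 = (1 - lam) ^ 2 - ‖z - lam‖ ^ 2 := by
  simp only [Complex.sq_norm, normSq_apply, sub_re, sub_im, one_re, one_im, ofReal_re, ofReal_im]
  ring

theorem ball_real_subset_unitBall {lam : ℝ} (hlam : 0 ≤ lam) :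
    ball (lam : ℂ) (1 - lam) ⊆ ball 0 1 :=
  ball_subset_ball' <| by simp [abs_of_nonneg hlam]

theorem mul_norm_sub_one_sq_lt {z : ℂ} {lam : ℝ} (hz : z ∈ ball (lam : ℂ) (1 - lam)) :
    lam * ‖z - 1‖ ^ 2 < (1 - lam) * (1 - ‖z‖ ^ 2) := by
  rw [mem_ball, dist_eq] at hz
  have hsq : ‖z - lam‖ ^ 2 < (1 - lam) ^ 2 := pow_lt_pow_left₀ hz (norm_nonneg _) two_ne_zero
  linarith [one_sub_mul_one_sub_norm_sq_sub_mul_norm_sub_one_sq z lam]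

theorem norm_sub_one_sq_le_div {z : ℂ} {lam : ℝ} (hlam : 0 < lam)
    (hz : z ∈ ball (lam : ℂ) (1 - lam)) : ‖z - 1‖ ^ 2 ≤ (1 - ‖z‖ ^ 2) / lam := by
  have hz1 : ‖z‖ < 1 := mem_ball_zero_iff.mp (ball_real_subset_unitBall hlam.le hz)
  have hd : 0 ≤ 1 - ‖z‖ ^ 2 := by nlinarith [norm_nonneg z]
  rw [le_div_iff₀ hlam]
  nlinarith [mul_norm_sub_one_sq_lt hz]

end Complex

theorem stmt_4_general (p : ℂ → ℂ) (M : ℝ)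
    (hbound : ∀ z ∈ Metric.ball (0 : ℂ) 1,
      ‖p z‖ ≤ M / (1 - ‖z‖ ^ 2))
    (G : ℂ → ℂ) (hG : ∀ z, G z = (z - 1) ^ 2 * p z) :
    ∀ lam : ℝ, lam ∈ Set.Ioo (0 : ℝ) 1 →
      ∀ z ∈ Metric.ball (lam : ℂ) (1 - lam), ‖G z‖ ≤ M / lam := by
  rintro lam ⟨hlam, -⟩ z hz
  have hz1 : z ∈ ball (0 : ℂ) 1 :=
    Complex.ball_real_subset_unitBall hlam.le hz
  have hd : 0 < 1 - ‖z‖ ^ 2 := by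
    have := mem_ball_zero_iff.mp hz1
    nlinarith [norm_nonneg z]
  calc ‖G z‖ = ‖z - 1‖ ^ 2 * ‖p z‖ := by rw [hG, norm_mul, norm_pow]
    _ ≤ (1 - ‖z‖ ^ 2) / lam * (M / (1 - ‖z‖ ^ 2)) :=
      mul_le_mul (Complex.norm_sub_one_sq_le_div hlam hz) (hbound z hz1)
        (norm_nonneg _) (by positivity)
    _ = M / lam := by field_simp

theorem stmt_4 (p : ℂ → ℂ) (M : ℝ) (hM : 0 < M)
    (hp : DifferentiableOn ℂ p (Metric.ball (0 : ℂ) 1))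
    (hre : ∀ z ∈ Metric.ball (0 : ℂ) 1, 0 ≤ (p z).re)
    (hbound : ∀ z ∈ Metric.ball (0 : ℂ) 1,
      ‖p z‖ ≤ M / (1 - ‖z‖ ^ 2))
    (G : ℂ → ℂ) (hG : ∀ z, G z = (z - 1) ^ 2 * p z) :
    ∀ lam : ℝ, lam ∈ Set.Ioo (0 : ℝ) 1 →
      ∀ z ∈ Metric.ball (lam : ℂ) (1 - lam), ‖G z‖ ≤ M / lam :=
  stmt_4_general p M hbound G hG
end

section
/- For t ≥ 0 and z in the right half-plane ℂ₊, define Φ_t(z) = (t/2 + z^{1/2})², where z^{1/2} is the principal square root. Then Φ_t maps ℂ₊ into ℂ₊, Φ₀ is the identity, and Φ_t ∘ Φ_s = Φ_{t+s} for all s, t ≥ 0. -/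
/-! Writing `√z` for the principal root, `(a + √z)² = a² + 2a√z + z` has positive real part for
`a ≥ 0` and `Re z > 0` because `Re √z ≥ 0`. Moreover `Re (a + √z) > 0`, so the principal root of
`(a + √z)²` is `a + √z` itself; the semigroup law then reduces to `t/2 + (s/2 + √z) = (t+s)/2 + √z`. -/

open Complex

namespace Complex

lemma re_cpow_inv_two_pos {z : ℂ} (hz : 0 < z.re) : 0 < (z ^ (2⁻¹ : ℂ)).re := by
  rw [cpow_inv_two_re]
  exact Real.sqrt_pos.2 (by linarith [re_le_norm z])

lemma re_add_cpow_inv_two_sq_pos {a : ℝ} (ha : 0 ≤ a) {z : ℂ} (hz : 0 < z.re) :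
    0 < (((a : ℂ) + z ^ (2⁻¹ : ℂ)) ^ 2).re := by
  have hexpand : ((a : ℂ) + z ^ (2⁻¹ : ℂ)) ^ 2 =
      (a ^ 2 : ℝ) + (2 * a : ℝ) * z ^ (2⁻¹ : ℂ) + z := by
    rw [add_sq, cpow_ofNat_inv_pow]
    push_cast
    ring
  have hroot : 0 ≤ (z ^ (2⁻¹ : ℂ)).re := (re_cpow_inv_two_pos hz).le
  rw [hexpand]
  simp only [add_re, ofReal_re, re_ofReal_mul]
  nlinarith [mul_nonneg ha hroot]

lemma add_cpow_inv_two_sq_cpow_inv_two {a : ℝ} (ha : 0 ≤ a) {z : ℂ} (hz : 0 < z.re) :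
    (((a : ℂ) + z ^ (2⁻¹ : ℂ)) ^ 2) ^ (2⁻¹ : ℂ) = a + z ^ (2⁻¹ : ℂ) :=
  sq_cpow_two_inv (by simpa using add_pos_of_nonneg_of_pos ha (re_cpow_inv_two_pos hz))

end Complex

theorem stmt_8 (Φ : ℝ → ℂ → ℂ)
    (hΦ : ∀ t : ℝ, ∀ z : ℂ, Φ t z = ((t : ℂ) / 2 + z ^ ((1 : ℂ) / 2)) ^ 2) :
    (∀ t : ℝ, 0 ≤ t → ∀ z : ℂ, 0 < z.re → 0 < (Φ t z).re) ∧
    (∀ z : ℂ, 0 < z.re → Φ 0 z = z) ∧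
    (∀ s t : ℝ, 0 ≤ s → 0 ≤ t → ∀ z : ℂ, 0 < z.re →
      Φ t (Φ s z) = Φ (t + s) z) := by
  have hΦ' : ∀ t z, Φ t z = (((t / 2 : ℝ) : ℂ) + z ^ (2⁻¹ : ℂ)) ^ 2 := by
    intro t z
    rw [hΦ, one_div]
    push_cast
    rfl
  refine ⟨fun t ht z hz => ?_, fun z _ => ?_, fun s t hs ht z hz => ?_⟩
  · rw [hΦ']
    exact re_add_cpow_inv_two_sq_pos (by positivity) hz
  · simp [hΦ']
  · rw [hΦ' t, hΦ' s, add_cpow_inv_two_sq_cpow_inv_two (by positivity) hz, hΦ']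
    push_cast
    ring
end

section
/- Let H : ℂ₊ → ℂ be the infinitesimal generator of a continuous semigroup {Φ_t} on the right half-plane with Re H ≥ 0, and suppose H is bounded on ℂ_ε for every ε > 0. Then Re(Φ_t(z)) → Re(z) as t → 0⁺ uniformly in z ∈ ℂ₊; quantitatively: for every ε > 0, if M = sup_{Re z > ε/2} |H(z)| and t ≤ ε/(2M), then 0 ≤ Re(Φ_t(z)) − Re(z) < ε for all z ∈ ℂ₊. -/
/-!
Along an orbit, `f(s) = Re Φ_s(z)` has derivative `Re H(Φ_s(z)) ≥ 0`, so it never decreases.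
Once `f` exceeds `ε/2` the bound `|H| ≤ M` caps its speed by `M`; so from the last time it was
below `max (Re z) (ε/2)` it can gain at most `M t ≤ ε/2`, and `max (Re z) (ε/2) < Re z + ε/2`.
-/

open Set

theorem le_max_add_mul_of_hasDerivAt_le {f f' : ℝ → ℝ} {a b c M : ℝ} (hab : a ≤ b)
    (hM : 0 ≤ M) (hf : ∀ x ∈ Icc a b, HasDerivAt f (f' x) x)
    (hf' : ∀ x ∈ Ioo a b, c < f x → f' x ≤ M) :
    f b ≤ max (f a) c + M * (b - a) := by
  have hcont : ContinuousOn f (Icc a b) := fun x hx => (hf x hx).continuousAt.continuousWithinAt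
  set S := Icc a b ∩ f ⁻¹' Iic (max (f a) c)
  have haS : a ∈ S := ⟨left_mem_Icc.2 hab, le_max_left (f a) c⟩
  have hSbdd : BddAbove S := bddAbove_Icc.mono inter_subset_left
  obtain ⟨⟨has, hsb⟩, hfs : f (sSup S) ≤ max (f a) c⟩ : sSup S ∈ S :=
    (hcont.preimage_isClosed_of_isClosed isClosed_Icc isClosed_Iic).csSup_mem ⟨a, haS⟩ hSbdd
  set s := sSup S
  have hafter : ∀ x ∈ Ioo s b, max (f a) c < f x := fun x hx => by
    by_contra! h
    exact (le_csSup hSbdd ⟨⟨has.trans hx.1.le, hx.2.le⟩, h⟩).not_gt hx.1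
  have hsub : Ioo s b ⊆ Icc a b := fun x hx => ⟨has.trans hx.1.le, hx.2.le⟩
  have hgrowth : f b - f s ≤ M * (b - s) := by
    refine (convex_Icc s b).image_sub_le_mul_sub_of_deriv_le
      (hcont.mono (Icc_subset_Icc_left has)) ?_ ?_ s (left_mem_Icc.2 hsb) b
      (right_mem_Icc.2 hsb) hsb <;> rw [interior_Icc]
    · exact fun x hx => (hf x (hsub hx)).differentiableAt.differentiableWithinAt
    · intro x hx
      rw [(hf x (hsub hx)).deriv]
      exact hf' x ⟨has.trans_lt hx.1, hx.2⟩ ((le_max_right _ _).trans_lt (hafter x hx))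
  have hMs : M * (b - s) ≤ M * (b - a) := mul_le_mul_of_nonneg_left (by linarith) hM
  linarith

theorem stmt_12_general (H : ℂ → ℂ)
    (hre : ∀ z : ℂ, 0 < z.re → 0 ≤ (H z).re)
    (Φ : ℝ → ℂ → ℂ)
    (hmaps : ∀ t : ℝ, 0 ≤ t → ∀ z : ℂ, 0 < z.re → 0 < (Φ t z).re)
    (h0 : ∀ z : ℂ, 0 < z.re → Φ 0 z = z)
    (hderiv : ∀ z : ℂ, 0 < z.re → ∀ t : ℝ, 0 ≤ t →
      HasDerivAt (fun s : ℝ => Φ s z) (H (Φ t z)) t) :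
    ∀ ε > (0 : ℝ), ∀ M > (0 : ℝ),
      (∀ z : ℂ, ε / 2 < z.re → ‖H z‖ ≤ M) →
      ∀ t : ℝ, 0 ≤ t → t ≤ ε / (2 * M) → ∀ z : ℂ, 0 < z.re →
        0 ≤ (Φ t z).re - z.re ∧ (Φ t z).re - z.re < ε := by
  intro ε hε M hM hbound t ht htM z hz
  have hf : ∀ s ∈ Ici (0 : ℝ), HasDerivAt (fun s => (Φ s z).re) (H (Φ s z)).re s :=
    fun s hs => (Complex.reCLM.hasFDerivAt.comp_hasDerivAt s (hderiv z hz s hs) :)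
  have hmono : MonotoneOn (fun s => (Φ s z).re) (Ici 0) :=
    monotoneOn_of_hasDerivWithinAt_nonneg (convex_Ici 0)
      (fun s hs => (hf s hs).continuousAt.continuousWithinAt)
      (fun s hs => (hf s (interior_subset hs)).hasDerivWithinAt)
      (fun s hs => hre _ (hmaps s (interior_subset hs) z hz))
  have hgrowth := le_max_add_mul_of_hasDerivAt_le (c := ε / 2) ht hM.le
    (fun s hs => hf s hs.1)
    (fun s _ hs => (Complex.re_le_norm _).trans (hbound _ hs))
  have hMt : M * t ≤ ε / 2 := by
    calc M * t ≤ M * (ε / (2 * M)) := mul_le_mul_of_nonneg_left htM hM.le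
      _ = ε / 2 := by field_simp
  have hmax : max z.re (ε / 2) < z.re + ε / 2 := max_lt (by linarith) (by linarith)
  have hlow := hmono self_mem_Ici (mem_Ici.2 ht) ht
  simp only [h0 z hz, sub_zero] at hgrowth hlow
  constructor <;> linarith

theorem stmt_12 (H : ℂ → ℂ)
    (hH : DifferentiableOn ℂ H {w : ℂ | 0 < w.re})
    (hre : ∀ z : ℂ, 0 < z.re → 0 ≤ (H z).re)
    (Φ : ℝ → ℂ → ℂ)
    (hmaps : ∀ t : ℝ, 0 ≤ t → ∀ z : ℂ, 0 < z.re → 0 < (Φ t z).re)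
    (h0 : ∀ z : ℂ, 0 < z.re → Φ 0 z = z)
    (hderiv : ∀ z : ℂ, 0 < z.re → ∀ t : ℝ, 0 ≤ t →
      HasDerivAt (fun s : ℝ => Φ s z) (H (Φ t z)) t)
    (hbounded : ∀ ε > (0 : ℝ), ∃ M : ℝ, ∀ z : ℂ, ε < z.re → ‖H z‖ ≤ M) :
    ∀ ε > (0 : ℝ), ∀ M > (0 : ℝ),
      (∀ z : ℂ, ε / 2 < z.re → ‖H z‖ ≤ M) →
      ∀ t : ℝ, 0 ≤ t → t ≤ ε / (2 * M) → ∀ z : ℂ, 0 < z.re →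
        0 ≤ (Φ t z).re - z.re ∧ (Φ t z).re - z.re < ε :=
  stmt_12_general H hre Φ hmaps h0 hderiv
end

section
/- Let H : ℂ₊ → ℂ be the infinitesimal generator of a continuous semigroup {Φ_t} on ℂ₊ with Re H ≥ 0, and suppose there exist K > 0 and ε₀ > 0 such that sup_{z ∈ ℂ_ε} |H(z)| ≤ K/ε for all 0 < ε < ε₀. Then for all t < ε₀² and all z ∈ ℂ₊, one has 0 ≤ Re(Φ_t(z)) − Re(z) ≤ (1+K)√t. -/
/-!
Along a trajectory, `f s = Re Φ_s(z)` has derivative `Re H(Φ_s z) ≥ 0`, so it is non-decreasing.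
For the upper bound put `ε = √t`: as long as `f > ε` its slope is at most `‖H‖ ≤ K/ε`, so by a
barrier argument `f t ≤ max ε (f 0) + (K/ε) t ≤ Re z + ε + Kε`.
-/

open Set Filter Topology

theorem image_le_max_add_mul_of_deriv_le_of_lt {f f' : ℝ → ℝ} {a b c C : ℝ} (hab : a ≤ b)
    (hC : 0 ≤ C) (hf : ContinuousOn f (Icc a b))
    (hf' : ∀ x ∈ Ico a b, HasDerivWithinAt f (f' x) (Ici x) x)
    (bound : ∀ x ∈ Ico a b, c < f x → f' x ≤ C) :
    f b ≤ max c (f a) + C * (b - a) := by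
  set g : ℝ → ℝ := fun σ => max c (f a) + σ + (C + σ) * (b - a)
  -- The slack `σ` keeps the barrier strictly above `c`, so wherever `f` touches it, `c < f x`.
  have fence : ∀ σ > 0, f b ≤ g σ := fun σ hσ => by
    set B : ℝ → ℝ := fun x => max c (f a) + σ + (C + σ) * (x - a)
    have hB : ∀ x, HasDerivAt B (C + σ) x := fun x => by
      simpa [B] using (((hasDerivAt_id x).sub_const a).const_mul (C + σ)).const_add (max c (f a) + σ)
    have hfa : f a ≤ B a := by
      simp only [B, sub_self, mul_zero, add_zero]; linarith [le_max_right c (f a)]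
    refine image_le_of_deriv_right_lt_deriv_boundary hf hf' hfa hB (fun x hx hfx => ?_)
      (right_mem_Icc.2 hab)
    have hcx : c < f x := by
      rw [hfx]
      nlinarith [le_max_left c (f a), mul_nonneg (add_nonneg hC hσ.le) (sub_nonneg.2 hx.1)]
    linarith [bound x hx hcx]
  have hg : Tendsto g (𝓝[>] 0) (𝓝 (g 0)) :=
    ((by fun_prop : Continuous g).tendsto 0).mono_left nhdsWithin_le_nhds
  simpa [g] using ge_of_tendsto hg (eventually_nhdsWithin_of_forall fence)

theorem stmt_13_general (H : ℂ → ℂ) (K ε₀ : ℝ) (hK : 0 < K) (hε₀ : 0 < ε₀)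
    (hre : ∀ z : ℂ, 0 < z.re → 0 ≤ (H z).re)
    (hbound : ∀ ε : ℝ, 0 < ε → ε < ε₀ → ∀ z : ℂ, ε < z.re →
      ‖H z‖ ≤ K / ε)
    (Φ : ℝ → ℂ → ℂ)
    (hmaps : ∀ t : ℝ, 0 ≤ t → ∀ z : ℂ, 0 < z.re → 0 < (Φ t z).re)
    (h0 : ∀ z : ℂ, 0 < z.re → Φ 0 z = z)
    (hderiv : ∀ z : ℂ, 0 < z.re → ∀ t : ℝ, 0 ≤ t →
      HasDerivAt (fun s : ℝ => Φ s z) (H (Φ t z)) t) :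
    ∀ t : ℝ, 0 < t → t < ε₀ ^ 2 → ∀ z : ℂ, 0 < z.re →
      0 ≤ (Φ t z).re - z.re ∧ (Φ t z).re - z.re ≤ (1 + K) * Real.sqrt t := by
  intro t ht htε z hz
  set f : ℝ → ℝ := fun s => (Φ s z).re
  have hf' : ∀ s, 0 ≤ s → HasDerivAt f (H (Φ s z)).re s := fun s hs =>
    Complex.reCLM.hasFDerivAt.comp_hasDerivAt s (hderiv z hz s hs)
  have hfc : ContinuousOn f (Ici 0) := fun s hs => (hf' s hs).continuousAt.continuousWithinAt
  have hf0 : f 0 = z.re := by simp [f, h0 z hz]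
  have hmono : MonotoneOn f (Ici 0) :=
    monotoneOn_of_hasDerivWithinAt_nonneg (convex_Ici 0) hfc
      (fun s hs => (hf' s (interior_subset hs)).hasDerivWithinAt)
      (fun s hs => hre _ (hmaps s (interior_subset hs) z hz))
  set ε := Real.sqrt t
  have hε : 0 < ε := Real.sqrt_pos.2 ht
  have hεε₀ : ε < ε₀ := (Real.sqrt_lt' hε₀).2 htε
  have hupper : f t ≤ max ε (f 0) + K / ε * (t - 0) :=
    image_le_max_add_mul_of_deriv_le_of_lt ht.le (div_pos hK hε).le
      (hfc.mono Icc_subset_Ici_self) (fun s hs => (hf' s hs.1).hasDerivWithinAt)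
      (fun s _ hs => (Complex.re_le_norm _).trans (hbound ε hε hεε₀ _ hs))
  have hKt : K / ε * t = K * ε := by
    rw [← Real.mul_self_sqrt ht.le, ← mul_assoc, div_mul_cancel₀ K hε.ne']
  refine ⟨?_, ?_⟩
  · rw [← hf0]; exact sub_nonneg.2 (hmono self_mem_Ici ht.le ht.le)
  · rw [← hf0] at hz ⊢
    rw [sub_zero, hKt] at hupper
    have hmax := max_le_add_of_nonneg hε.le hz.le
    linarith

theorem stmt_13 (H : ℂ → ℂ) (K ε₀ : ℝ) (hK : 0 < K) (hε₀ : 0 < ε₀)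
    (hH : DifferentiableOn ℂ H {w : ℂ | 0 < w.re})
    (hre : ∀ z : ℂ, 0 < z.re → 0 ≤ (H z).re)
    (hbound : ∀ ε : ℝ, 0 < ε → ε < ε₀ → ∀ z : ℂ, ε < z.re →
      ‖H z‖ ≤ K / ε)
    (Φ : ℝ → ℂ → ℂ)
    (hmaps : ∀ t : ℝ, 0 ≤ t → ∀ z : ℂ, 0 < z.re → 0 < (Φ t z).re)
    (h0 : ∀ z : ℂ, 0 < z.re → Φ 0 z = z)
    (hderiv : ∀ z : ℂ, 0 < z.re → ∀ t : ℝ, 0 ≤ t →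
      HasDerivAt (fun s : ℝ => Φ s z) (H (Φ t z)) t) :
    ∀ t : ℝ, 0 < t → t < ε₀ ^ 2 → ∀ z : ℂ, 0 < z.re →
      0 ≤ (Φ t z).re - z.re ∧ (Φ t z).re - z.re ≤ (1 + K) * Real.sqrt t :=
  stmt_13_general H K ε₀ hK hε₀ hre hbound Φ hmaps h0 hderiv
end
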